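/- In a perfect REL-algebra, let a, b, c be atoms with a ≤ b;c and a ≤ 1'. Then b = c⌣ and c = b⌣. -/
import Mathlib

class PerfectREL (α : Type*) [CompleteBooleanAlgebra α] [IsAtomic α] where
  comp : α → α → α
  conv : α → α
  id' : α
  ax2 : ∀ x y : α, conv (x ⊓ conv y) = conv x ⊓ y
  ax3l : ∀ x y z : α, comp (x ⊔ y) z = comp x z ⊔ comp y z
  ax3r : ∀ x y z : α, comp x (y ⊔ z) = comp x y ⊔ comp x z
  ax4l : comp (⊤ : α) ⊥ = ⊥
  ax4r : comp (⊥ : α) ⊤ = ⊥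
  ax5l : ∀ x y z : α, comp (conv x) y ⊓ z = comp (conv x) (y ⊓ comp (conv (conv x)) z) ⊓ z
  ax5r : ∀ x y z : α, comp x (conv y) ⊓ z = comp (x ⊓ comp z (conv (conv y))) (conv y) ⊓ z
  ax6l : ∀ x : α, comp id' x ≤ x
  ax6r : ∀ x : α, comp x id' ≤ x
  ax7 : comp (id' : α) id' = id'
  ax8 : comp ((conv (⊤ : α))ᶜ) ((conv (⊤ : α))ᶜ) ⊓ id' = ⊥
  ax9a : ∀ x y z : α, comp (comp (x ⊓ id') y) z = comp (x ⊓ id') (comp y z)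
  ax9b : ∀ x y z : α, comp (comp x (y ⊓ id')) z = comp x (comp (y ⊓ id') z)
  ax9c : ∀ x y z : α, comp (comp x y) (z ⊓ id') = comp x (comp y (z ⊓ id'))
  conv_sSup : ∀ S : Set α, conv (sSup S) = ⨆ x ∈ S, conv x
  comp_sSup_left : ∀ (S : Set α) (y : α), comp (sSup S) y = ⨆ x ∈ S, comp x y
  comp_sSup_right : ∀ (x : α) (S : Set α), comp x (sSup S) = ⨆ y ∈ S, comp x y

open PerfectREL

variable {α : Type*} [CompleteBooleanAlgebra α] [IsAtomic α] [PerfectREL α]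

lemma conv_bot' : conv (⊥ : α) = ⊥ := by
  have := conv_sSup (∅ : Set α)
  simpa using this

lemma conv_mono' {x y : α} (h : x ≤ y) : conv x ≤ conv y := by
  have hp := conv_sSup ({x, y} : Set α)
  rw [sSup_pair, sup_eq_right.mpr h] at hp
  rw [hp, iSup_pair]
  exact le_sup_left

lemma comp_bot_right' (x : α) : comp x (⊥ : α) = ⊥ := by
  have := comp_sSup_right x (∅ : Set α)
  simpa using this

lemma comp_bot_left' (x : α) : comp (⊥ : α) x = ⊥ := by
  have := comp_sSup_left (∅ : Set α) x
  simpa using this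

lemma comp_mono' {x y x' y' : α} (hx : x ≤ x') (hy : y ≤ y') :
    comp x y ≤ comp x' y' := by
  have h1 : comp x y ≤ comp x' y := by
    have hp := comp_sSup_left ({x, x'} : Set α) y
    rw [sSup_pair, sup_eq_right.mpr hx] at hp
    rw [hp, iSup_pair]; exact le_sup_left
  refine h1.trans ?_
  have hp := comp_sSup_right x' ({y, y'} : Set α)
  rw [sSup_pair, sup_eq_right.mpr hy] at hp
  rw [hp, iSup_pair]; exact le_sup_left

lemma convconv' (y : α) : conv (conv y) = conv ⊤ ⊓ y := by
  have := ax2 (⊤ : α) y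
  simpa using this

lemma conv_le_convtop (x : α) : conv x ≤ conv (⊤ : α) := conv_mono' le_top

lemma conv3 (x : α) : conv (conv (conv x)) = conv x := by
  rw [convconv', inf_eq_right.mpr (conv_le_convtop x)]

lemma atom_le_of_inf_ne {x y : α} (hx : IsAtom x) (h : x ⊓ y ≠ ⊥) : x ≤ y := by
  rcases (inf_le_left : x ⊓ y ≤ x).lt_or_eq with h' | h'
  · exact absurd (hx.2 _ h') h
  · exact inf_eq_left.mp h'

lemma eq_of_atom_le {x y : α} (hx : IsAtom x) (hy : y ≠ ⊥) (h : y ≤ x) : y = x := by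
  rcases h.lt_or_eq with h' | h'
  · exact absurd (hx.2 _ h') hy
  · exact h'

lemma conv_atom {b : α} (hb : IsAtom b) (hle : b ≤ conv (⊤ : α)) :
    IsAtom (conv b) ∧ conv (conv b) = b := by
  have hcc : conv (conv b) = b := by rw [convconv', inf_eq_right.mpr hle]
  have hne : conv b ≠ ⊥ := by
    intro h0
    exact hb.1 (by rw [← hcc, h0, conv_bot'])
  refine ⟨⟨hne, ?_⟩, hcc⟩
  intro u hu
  by_contra hu0
  have hule : u ≤ conv b := hu.le
  have hut : u ≤ conv ⊤ := hule.trans (conv_le_convtop b)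
  have huu : conv (conv u) = u := by rw [convconv', inf_eq_right.mpr hut]
  have hcu : conv u ≤ b := by
    have := conv_mono' hule
    rwa [hcc] at this
  have hcune : conv u ≠ ⊥ := by
    intro h0
    exact hu0 (by rw [← huu, h0, conv_bot'])
  have : conv u = b := eq_of_atom_le hb hcune hcu
  have : u = conv b := by rw [← huu, this]
  exact absurd this hu.ne

theorem cycle_id (a b c : α) (ha : IsAtom a) (hb : IsAtom b) (hc : IsAtom c)
    (h : a ≤ comp b c) (hid : a ≤ id') :
    b = conv c ∧ c = conv b := by
  by_cases hbT : b ⊓ conv (⊤ : α) ≠ ⊥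
  · -- b ≤ conv ⊤
    have hble : b ≤ conv (⊤ : α) := atom_le_of_inf_ne hb hbT
    obtain ⟨hcb_atom, hcb⟩ := conv_atom hb hble
    have e5 := ax5l (conv b) c a
    rw [hcb] at e5
    have hA : a ≤ comp b (c ⊓ comp (conv b) a) ⊓ a := by
      rw [← e5]; exact le_inf h le_rfl
    have hmeet : c ⊓ comp (conv b) a ≠ ⊥ := by
      intro h0
      rw [h0, comp_bot_right'] at hA
      simpa using ha.1 (le_bot_iff.mp (hA.trans inf_le_left))
    have hcle : c ≤ comp (conv b) a := atom_le_of_inf_ne hc hmeet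
    have hcle2 : c ≤ conv b :=
      hcle.trans ((comp_mono' le_rfl hid).trans (ax6r (conv b)))
    have hcb' : c = conv b := eq_of_atom_le hcb_atom hc.1 hcle2
    exact ⟨by rw [hcb', hcb], hcb'⟩
  · push_neg at hbT
    have hbC : b ≤ (conv (⊤ : α))ᶜ := (disjoint_iff.mpr hbT).le_compl_right
    by_cases hcT : c ⊓ conv (⊤ : α) ≠ ⊥
    · -- c ≤ conv ⊤, use ax5r
      have hcle : c ≤ conv (⊤ : α) := atom_le_of_inf_ne hc hcT
      obtain ⟨hcc_atom, hcc⟩ := conv_atom hc hcle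
      have e5 := ax5r b (conv c) a
      rw [hcc] at e5
      have hA : a ≤ comp (b ⊓ comp a (conv c)) c ⊓ a := by
        rw [← e5]; exact le_inf h le_rfl
      have hmeet : b ⊓ comp a (conv c) ≠ ⊥ := by
        intro h0
        rw [h0, comp_bot_left'] at hA
        simpa using ha.1 (le_bot_iff.mp (hA.trans inf_le_left))
      have hble : b ≤ comp a (conv c) := atom_le_of_inf_ne hb hmeet
      have hble2 : b ≤ conv c :=
        hble.trans ((comp_mono' hid le_rfl).trans (ax6l (conv c)))
      have hbc : b = conv c := eq_of_atom_le hcc_atom hb.1 hble2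
      exact ⟨hbc, by rw [hbc, hcc]⟩
    · push_neg at hcT
      have hcC : c ≤ (conv (⊤ : α))ᶜ := (disjoint_iff.mpr hcT).le_compl_right
      exfalso
      have : a ≤ comp ((conv (⊤ : α))ᶜ) ((conv (⊤ : α))ᶜ) ⊓ id' :=
        le_inf (h.trans (comp_mono' hbC hcC)) hid
      rw [ax8] at this
      exact ha.1 (le_bot_iff.mp this)
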